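/- For every integer t ≥ 1, the number M_c(t) of 3×3 magic squares with all entries strictly between 0 and t satisfies M_c(t) = Σ_{k=0}^{t−1} (t−1−k)·R_mc(k), where R_mc(k) is the number of reduced 3×3 magic squares whose maximum entry equals k. -/
import Mathlib


/-- A 3×3 magic square: all nine entries distinct, all row sums, column sums,
the main diagonal sum and the antidiagonal sum equal. -/
def IsMagicSq (x : Matrix (Fin 3) (Fin 3) ℤ) : Prop :=
  (Function.Injective fun p : Fin 3 × Fin 3 => x p.1 p.2) ∧
  ∃ s : ℤ, (∀ i, ∑ j, x i j = s) ∧ (∀ j, ∑ i, x i j = s) ∧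
    x 0 0 + x 1 1 + x 2 2 = s ∧ x 0 2 + x 1 1 + x 2 0 = s

/-- `Mc t` = number of 3×3 magic squares all of whose entries lie strictly
between 0 and t. -/
noncomputable def Mc (t : ℕ) : ℕ :=
  {x : Matrix (Fin 3) (Fin 3) ℤ |
    IsMagicSq x ∧ ∀ i j, 0 < x i j ∧ x i j < (t : ℤ)}.ncard

/-- `Rmc k` = number of reduced 3×3 magic squares (nonnegative entries, minimum
entry 0) whose maximum entry equals k. -/
noncomputable def Rmc (k : ℕ) : ℕ :=
  {x : Matrix (Fin 3) (Fin 3) ℤ |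
    IsMagicSq x ∧ (∀ i j, 0 ≤ x i j) ∧ (∃ i j, x i j = 0) ∧
    (∀ i j, x i j ≤ (k : ℤ)) ∧ (∃ i j, x i j = (k : ℤ))}.ncard

/-! ### Auxiliary machinery -/

/-- Shift every entry of a matrix by a constant. -/
def shiftM (m : ℤ) (x : Matrix (Fin 3) (Fin 3) ℤ) : Matrix (Fin 3) (Fin 3) ℤ :=
  fun i j => x i j + m

lemma shiftM_shiftM (m : ℤ) (x : Matrix (Fin 3) (Fin 3) ℤ) :
    shiftM (-m) (shiftM m x) = x := by
  funext i j; simp [shiftM]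

lemma shiftM_inj (m : ℤ) : Function.Injective (shiftM m) := by
  intro x y h
  have := congrArg (shiftM (-m)) h
  rwa [shiftM_shiftM, shiftM_shiftM] at this

lemma isMagic_shift (m : ℤ) {x : Matrix (Fin 3) (Fin 3) ℤ} (hx : IsMagicSq x) :
    IsMagicSq (shiftM m x) := by
  obtain ⟨hinj, s, hrow, hcol, hd, ha⟩ := hx
  refine ⟨?_, s + 3 * m, ?_, ?_, ?_, ?_⟩
  · intro p q h
    exact hinj (by simpa [shiftM] using h)
  · intro i
    have := hrow i
    rw [Fin.sum_univ_three] at this ⊢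
    simp only [shiftM]; linarith
  · intro j
    have := hcol j
    rw [Fin.sum_univ_three] at this ⊢
    simp only [shiftM]; linarith
  · simp only [shiftM]; linarith
  · simp only [shiftM]; linarith

/-- The set of reduced magic squares with maximum `k`. -/
def Rset (k : ℕ) : Set (Matrix (Fin 3) (Fin 3) ℤ) :=
  {x | IsMagicSq x ∧ (∀ i j, 0 ≤ x i j) ∧ (∃ i j, x i j = 0) ∧
    (∀ i j, x i j ≤ (k : ℤ)) ∧ (∃ i j, x i j = (k : ℤ))}

lemma Rmc_eq (k : ℕ) : Rmc k = (Rset k).ncard := rfl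

lemma Rset_finite (k : ℕ) : (Rset k).Finite := by
  have hIcc : (Set.Icc (0:ℤ) k).Finite := Set.finite_Icc _ _
  have hA : {r : Fin 3 → ℤ | ∀ j, r j ∈ Set.Icc (0:ℤ) k}.Finite := by
    have := Set.Finite.pi (fun _ : Fin 3 => hIcc)
    refine this.subset ?_
    intro r hr
    simp only [Set.mem_pi, Set.mem_univ, forall_true_left]
    exact fun j => hr j
  have hB : {x : Matrix (Fin 3) (Fin 3) ℤ |
      ∀ i, x i ∈ {r : Fin 3 → ℤ | ∀ j, r j ∈ Set.Icc (0:ℤ) k}}.Finite := by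
    have := Set.Finite.pi (fun _ : Fin 3 => hA)
    refine this.subset ?_
    intro x hx
    simp only [Set.mem_pi, Set.mem_univ, forall_true_left]
    exact fun i => hx i
  refine hB.subset ?_
  rintro x ⟨-, hnn, -, hle, -⟩ i j
  exact ⟨hnn i j, hle i j⟩

/-- The set of magic squares with minimum `m` and maximum `m + k`. -/
def Tset (k m : ℕ) : Set (Matrix (Fin 3) (Fin 3) ℤ) :=
  shiftM (m : ℤ) '' Rset k

lemma Tset_finite (k m : ℕ) : (Tset k m).Finite := (Rset_finite k).image _

lemma ncard_Tset (k m : ℕ) : (Tset k m).ncard = Rmc k :=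
  Set.ncard_image_of_injective _ (shiftM_inj _)

lemma mem_Tset_iff {k m : ℕ} {x : Matrix (Fin 3) (Fin 3) ℤ} :
    x ∈ Tset k m ↔ IsMagicSq x ∧ (∀ i j, (m : ℤ) ≤ x i j) ∧ (∃ i j, x i j = (m : ℤ)) ∧
      (∀ i j, x i j ≤ (m : ℤ) + k) ∧ (∃ i j, x i j = (m : ℤ) + k) := by
  constructor
  · rintro ⟨y, ⟨hm, hnn, ⟨i0, j0, h0⟩, hle, ⟨i1, j1, h1⟩⟩, rfl⟩
    refine ⟨isMagic_shift _ hm, fun i j => ?_, ⟨i0, j0, ?_⟩, fun i j => ?_, ⟨i1, j1, ?_⟩⟩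
    · simpa [shiftM] using hnn i j
    · simp [shiftM, h0]
    · simp only [shiftM]; linarith [hle i j]
    · simp only [shiftM]; linarith
  · rintro ⟨hm, hnn, ⟨i0, j0, h0⟩, hle, ⟨i1, j1, h1⟩⟩
    refine ⟨shiftM (-(m:ℤ)) x, ⟨isMagic_shift _ hm, fun i j => ?_, ⟨i0, j0, ?_⟩,
      fun i j => ?_, ⟨i1, j1, ?_⟩⟩, ?_⟩
    · simp only [shiftM]; linarith [hnn i j]
    · simp [shiftM, h0]
    · simp only [shiftM]; linarith [hle i j]
    · simp only [shiftM]; linarith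
    · funext i j; simp [shiftM]

lemma Tset_disjoint {k m k' m' : ℕ} (h : (k, m) ≠ (k', m')) :
    Disjoint (Tset k m) (Tset k' m') := by
  rw [Set.disjoint_left]
  intro x hx hx'
  rw [mem_Tset_iff] at hx hx'
  obtain ⟨-, hnn, ⟨i0, j0, h0⟩, hle, ⟨i1, j1, h1⟩⟩ := hx
  obtain ⟨-, hnn', ⟨i0', j0', h0'⟩, hle', ⟨i1', j1', h1'⟩⟩ := hx'
  have hm : (m : ℤ) = m' := le_antisymm (h0' ▸ hnn i0' j0') (h0 ▸ hnn' i0 j0)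
  have hk : (m : ℤ) + k = m' + k' := le_antisymm (h1 ▸ hle' i1 j1) (h1' ▸ hle i1' j1')
  apply h
  have : (m : ℤ) = m' ∧ (k : ℤ) = k' := ⟨hm, by linarith⟩
  have hm' : m = m' := by exact_mod_cast this.1
  have hk' : k = k' := by exact_mod_cast this.2
  simp [hm', hk']

/-- ncard of a pairwise disjoint finite biUnion. -/
lemma ncard_finset_biUnion {α ι : Type*} (F : Finset ι) (f : ι → Set α)
    (hfin : ∀ i ∈ F, (f i).Finite)
    (hdisj : ∀ i ∈ F, ∀ j ∈ F, i ≠ j → Disjoint (f i) (f j)) :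
    (⋃ i ∈ F, f i).ncard = ∑ i ∈ F, (f i).ncard := by
  classical
  induction F using Finset.induction_on with
  | empty => simp
  | @insert a F ha ih =>
    have hfa : (f a).Finite := hfin a (Finset.mem_insert_self a F)
    have hfF : (⋃ i ∈ F, f i).Finite :=
      Set.Finite.biUnion F.finite_toSet (fun i hi => hfin i (Finset.mem_insert_of_mem hi))
    have hd : Disjoint (f a) (⋃ i ∈ F, f i) := by
      rw [Set.disjoint_iUnion_right]
      intro i
      rw [Set.disjoint_iUnion_right]
      intro hi
      exact hdisj a (Finset.mem_insert_self a F) i (Finset.mem_insert_of_mem hi)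
        (fun h => ha (h ▸ hi))
    rw [Finset.sum_insert ha, Finset.set_biUnion_insert,
      Set.ncard_union_eq hd hfa hfF,
      ih (fun i hi => hfin i (Finset.mem_insert_of_mem hi))
        (fun i hi j hj hij =>
          hdisj i (Finset.mem_insert_of_mem hi) j (Finset.mem_insert_of_mem hj) hij)]

theorem magic_cubic_via_reduced (t : ℕ) (ht : 1 ≤ t) :
    Mc t = ∑ k ∈ Finset.range t, (t - 1 - k) * Rmc k := by
  classical
  have hS : {x : Matrix (Fin 3) (Fin 3) ℤ |
      IsMagicSq x ∧ ∀ i j, 0 < x i j ∧ x i j < (t : ℤ)} =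
      ⋃ k ∈ Finset.range t, ⋃ m ∈ Finset.Ico 1 (t - k), Tset k m := by
    ext x
    simp only [Set.mem_setOf_eq, Set.mem_iUnion, Finset.mem_range, Finset.mem_Ico]
    constructor
    · rintro ⟨hm, hb⟩
      set g : Fin 3 × Fin 3 → ℤ := fun p => x p.1 p.2 with hg
      have hne : (Finset.univ : Finset (Fin 3 × Fin 3)).Nonempty := Finset.univ_nonempty
      set a := Finset.univ.inf' hne g with hadef
      set b := Finset.univ.sup' hne g with hbdef
      obtain ⟨p, -, hp⟩ := Finset.exists_mem_eq_inf' hne g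
      obtain ⟨q, -, hq⟩ := Finset.exists_mem_eq_sup' hne g
      have hpa : a = x p.1 p.2 := hadef.trans hp
      have hqb : b = x q.1 q.2 := hbdef.trans hq
      have hale : ∀ i j, a ≤ x i j := fun i j =>
        Finset.inf'_le g (Finset.mem_univ (i, j))
      have hble : ∀ i j, x i j ≤ b := fun i j =>
        Finset.le_sup' g (Finset.mem_univ (i, j))
      have ha1 : 1 ≤ a := by
        have := (hb p.1 p.2).1
        omega
      have hbt : b ≤ (t : ℤ) - 1 := by
        have := (hb q.1 q.2).2
        omega
      have hab : a ≤ b := le_trans (hale p.1 p.2) (hble p.1 p.2)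
      refine ⟨(b - a).toNat, ?_, a.toNat, ⟨?_, ?_⟩, ?_⟩
      · have : (b - a : ℤ) < t := by omega
        omega
      · omega
      · omega
      · rw [mem_Tset_iff]
        have hca : ((a.toNat : ℕ) : ℤ) = a := Int.toNat_of_nonneg (by omega)
        have hck : (((b - a).toNat : ℕ) : ℤ) = b - a := Int.toNat_of_nonneg (by omega)
        refine ⟨hm, fun i j => ?_, ⟨p.1, p.2, ?_⟩, fun i j => ?_, ⟨q.1, q.2, ?_⟩⟩
        · rw [hca]; exact hale i j
        · rw [hca]; exact hpa.symm
        · rw [hca, hck]; have := hble i j; omega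
        · rw [hca, hck]; omega
    · rintro ⟨k, hk, m, ⟨hm1, hm2⟩, hx⟩
      rw [mem_Tset_iff] at hx
      obtain ⟨hmag, hge, -, hle, -⟩ := hx
      refine ⟨hmag, fun i j => ⟨?_, ?_⟩⟩
      · have := hge i j
        have : (1 : ℤ) ≤ m := by exact_mod_cast hm1
        linarith [hge i j]
      · have := hle i j
        have hmk : m + k < t := by omega
        have : ((m : ℤ) + k) < t := by exact_mod_cast hmk
        linarith [hle i j]
  rw [Mc, hS]
  rw [ncard_finset_biUnion]
  · refine Finset.sum_congr rfl fun k hk => ?_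
    rw [ncard_finset_biUnion]
    · rw [Finset.sum_congr rfl fun m _ => ncard_Tset k m, Finset.sum_const,
        Nat.card_Ico, smul_eq_mul]
      congr 1
      omega
    · exact fun m _ => Tset_finite k m
    · exact fun m _ m' _ hmm => Tset_disjoint (by simp [hmm])
  · intro k _
    exact Set.Finite.biUnion (Finset.Ico 1 (t - k)).finite_toSet
      (fun m _ => Tset_finite k m)
  · intro k _ k' _ hkk
    rw [Set.disjoint_iUnion_left]
    intro m
    rw [Set.disjoint_iUnion_left]
    intro _
    rw [Set.disjoint_iUnion_right]
    intro m'
    rw [Set.disjoint_iUnion_right]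
    intro _
    exact Tset_disjoint (by simp [hkk])
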